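/- Let X = (I,P) be a probabilistic coherence space and let t : Mfin(I) → [0,∞) satisfy Fun t(x) := Σ_μ t_μ x^μ ≤ 1 for all x ∈ P. Let p ∈ [0,1). Then Fun t is Lipschitz with constant 1/(1−p) on {x ∈ P | ‖x‖_X ≤ p} for the distance d_X: for all x,y ∈ P with ‖x‖_X ≤ p and ‖y‖_X ≤ p, |Fun t(x) − Fun t(y)| ≤ d_X(x,y)/(1−p). -/

import Mathlib

open scoped ENNReal NNReal

noncomputable section

/-- ⟨u,u'⟩ = Σ_i u_i u'_i in [0,∞]. -/
def dotE {I : Type*} (u v : I → ℝ≥0∞) : ℝ≥0∞ := ∑' i, u i * v i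

/-- The orthogonal P⊥ of a set P ⊆ [0,∞]^I. -/
def orthE {I : Type*} (P : Set (I → ℝ≥0∞)) : Set (I → ℝ≥0∞) :=
  {v | ∀ u ∈ P, dotE u v ≤ 1}

/-- (I,P) is a probabilistic coherence space. -/
structure IsPCS {I : Type*} (P : Set (I → ℝ≥0∞)) : Prop where
  biorth : orthE (orthE P) = P
  nonzero : ∀ a, ∃ x ∈ P, 0 < x a
  bounded : ∀ a, ∃ m : ℝ≥0, ∀ x ∈ P, x a ≤ (m : ℝ≥0∞)

/-- The norm ‖x‖_X = inf{r > 0 | x ∈ rP}. -/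
def pnorm {I : Type*} (P : Set (I → ℝ≥0∞)) (x : I → ℝ≥0∞) : ℝ≥0∞ :=
  sInf {r : ℝ≥0∞ | 0 < r ∧ ∃ z ∈ P, x = r • z}

/-- The distance d_X(x,y) = ‖x−(x∧y)‖_X + ‖y−(x∧y)‖_X. -/
def distX {I : Type*} (P : Set (I → ℝ≥0∞)) (x y : I → ℝ≥0∞) : ℝ≥0∞ :=
  pnorm P (x - x ⊓ y) + pnorm P (y - x ⊓ y)

/-- x^μ = Π_{a∈I} x_a^{μ(a)}. -/
def mpow {I : Type*} (x : I → ℝ≥0∞) (μ : Multiset I) : ℝ≥0∞ := (μ.map x).prod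

/-!
Write `w = x ⊓ y` and `x = w + s • u` with `u ∈ P`, and `x = r • z` with `z ∈ P` and `r < 1`.
Since `w ≤ r • z`, the point `w + (1 - r) • u` lies below the convex combination
`r • z + (1 - r) • u`, hence in `P`. Along the ray `λ ↦ w + λ • u` the function `Fun t` is a
power series with nonnegative coefficients, hence convex, and it is at most `1` at `λ = 1 - r`.
Comparing slopes gives `(Fun t x - Fun t w) * (1 - r) ≤ s`; taking the infimum over `s` and `r`
yields `Fun t x - Fun t w ≤ ‖x - w‖ / (1 - ‖x‖)`.
-/

/-- The function `Fun t` of the paper. -/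
def funOf {I : Type*} (t : Multiset I → ℝ≥0∞) (x : I → ℝ≥0∞) : ℝ≥0∞ :=
  ∑' μ, t μ * mpow x μ

section Orthogonal

variable {I : Type*} {Q : Set (I → ℝ≥0∞)}

lemma mem_orthE_of_le {u v : I → ℝ≥0∞} (hu : u ∈ orthE Q) (hvu : v ≤ u) : v ∈ orthE Q :=
  fun w hw => (ENNReal.tsum_le_tsum fun i => mul_le_mul_right (hvu i) _).trans (hu w hw)

lemma smul_add_smul_mem_orthE {u v : I → ℝ≥0∞} (hu : u ∈ orthE Q) (hv : v ∈ orthE Q)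
    {a b : ℝ≥0∞} (hab : a + b ≤ 1) : a • u + b • v ∈ orthE Q := by
  intro w hw
  have hdot : dotE w (a • u + b • v) = a * dotE w u + b * dotE w v := by
    simp only [dotE, Pi.add_apply, Pi.smul_apply, smul_eq_mul, mul_add]
    rw [ENNReal.tsum_add, ← ENNReal.tsum_mul_left, ← ENNReal.tsum_mul_left]
    congr 1 <;> exact tsum_congr fun i => by ring
  calc dotE w (a • u + b • v) = a * dotE w u + b * dotE w v := hdot
    _ ≤ a * 1 + b * 1 := by gcongr <;> [exact hu w hw; exact hv w hw]
    _ ≤ 1 := by simpa using hab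

end Orthogonal

namespace IsPCS

variable {I : Type*} {P : Set (I → ℝ≥0∞)}

lemma mem_of_le (hP : IsPCS P) {u v : I → ℝ≥0∞} (hu : u ∈ P) (hvu : v ≤ u) : v ∈ P := by
  rw [← hP.biorth] at hu ⊢
  exact mem_orthE_of_le hu hvu

lemma smul_add_smul_mem (hP : IsPCS P) {u v : I → ℝ≥0∞} (hu : u ∈ P) (hv : v ∈ P)
    {a b : ℝ≥0∞} (hab : a + b ≤ 1) : a • u + b • v ∈ P := by
  rw [← hP.biorth] at hu hv ⊢
  exact smul_add_smul_mem_orthE hu hv hab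

lemma add_smul_mem_of_le_smul (hP : IsPCS P) {w z u : I → ℝ≥0∞} {r : ℝ≥0∞}
    (hz : z ∈ P) (hu : u ∈ P) (hr : r ≤ 1) (hw : w ≤ r • z) : w + (1 - r) • u ∈ P :=
  hP.mem_of_le (hP.smul_add_smul_mem hz hu (add_tsub_cancel_of_le hr).le)
    (add_le_add_left hw _)

end IsPCS

section Monomials

variable {I : Type*}

lemma mpow_cons (x : I → ℝ≥0∞) (a : I) (μ : Multiset I) : mpow x (a ::ₘ μ) = x a * mpow x μ := by
  simp [mpow]

lemma mpow_mono {x y : I → ℝ≥0∞} (h : x ≤ y) (μ : Multiset I) : mpow x μ ≤ mpow y μ :=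
  Multiset.prod_map_le_prod_map₀ x y (fun _ _ => zero_le) fun a _ => h a

/-- Convexity of `λ ↦ (w + λ • z) ^ μ`, as a chord inequality through `0`, `s` and `ε`. -/
lemma mpow_add_smul_chord (w z : I → ℝ≥0∞) {s ε : ℝ≥0∞} (hse : s ≤ ε) (μ : Multiset I) :
    ε * mpow (w + s • z) μ + s * mpow w μ ≤ s * mpow (w + ε • z) μ + ε * mpow w μ := by
  induction μ using Multiset.induction with
  | empty => simp [mpow, add_comm]
  | cons a μ ih =>
    have hsε : mpow (w + s • z) μ ≤ mpow (w + ε • z) μ :=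
      mpow_mono (add_le_add_right (smul_le_smul_of_nonneg_right hse zero_le) _) μ
    simp only [mpow_cons, Pi.add_apply, Pi.smul_apply, smul_eq_mul]
    calc ε * ((w a + s * z a) * mpow (w + s • z) μ) + s * (w a * mpow w μ)
        = w a * (ε * mpow (w + s • z) μ + s * mpow w μ) + ε * s * (z a * mpow (w + s • z) μ) := by
          ring
      _ ≤ w a * (s * mpow (w + ε • z) μ + ε * mpow w μ) + ε * s * (z a * mpow (w + ε • z) μ) := by
          gcongr
      _ = s * ((w a + ε * z a) * mpow (w + ε • z) μ) + ε * (w a * mpow w μ) := by ring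

end Monomials

section Fun

variable {I : Type*} (t : Multiset I → ℝ≥0∞)

lemma funOf_mono {x y : I → ℝ≥0∞} (h : x ≤ y) : funOf t x ≤ funOf t y :=
  ENNReal.tsum_le_tsum fun μ => mul_le_mul_right (mpow_mono h μ) _

lemma funOf_add_smul_chord (w z : I → ℝ≥0∞) {s ε : ℝ≥0∞} (hse : s ≤ ε) :
    ε * funOf t (w + s • z) + s * funOf t w ≤ s * funOf t (w + ε • z) + ε * funOf t w := by
  simp only [funOf]
  rw [← ENNReal.tsum_mul_left, ← ENNReal.tsum_mul_left, ← ENNReal.tsum_mul_left,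
    ← ENNReal.tsum_mul_left, ← ENNReal.tsum_add, ← ENNReal.tsum_add]
  refine ENNReal.tsum_le_tsum fun μ => ?_
  calc ε * (t μ * mpow (w + s • z) μ) + s * (t μ * mpow w μ)
      = t μ * (ε * mpow (w + s • z) μ + s * mpow w μ) := by ring
    _ ≤ t μ * (s * mpow (w + ε • z) μ + ε * mpow w μ) :=
        mul_le_mul_right (mpow_add_smul_chord w z hse μ) _
    _ = s * (t μ * mpow (w + ε • z) μ) + ε * (t μ * mpow w μ) := by ring

/-- By convexity along the ray, the slope of `Fun t` on `[0, s]` is at most its slope on `[0, ε]`,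
which is at most `1 / ε`. -/
lemma funOf_add_smul_sub_mul_le {w z : I → ℝ≥0∞} {s ε : ℝ≥0∞} (hε : ε ≠ ⊤)
    (hs : funOf t (w + s • z) ≤ 1) (hε1 : funOf t (w + ε • z) ≤ 1) :
    (funOf t (w + s • z) - funOf t w) * ε ≤ s := by
  rcases le_or_gt ε s with hεs | hsε
  · calc (funOf t (w + s • z) - funOf t w) * ε ≤ 1 * ε := by gcongr; exact tsub_le_self.trans hs
      _ ≤ s := by rwa [one_mul]
  · have hchord : ε * funOf t (w + s • z) ≤ s + ε * funOf t w :=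
      calc ε * funOf t (w + s • z) ≤ ε * funOf t (w + s • z) + s * funOf t w := le_self_add
        _ ≤ s * funOf t (w + ε • z) + ε * funOf t w := funOf_add_smul_chord t w z hsε.le
        _ ≤ s * 1 + ε * funOf t w := by gcongr
        _ = s + ε * funOf t w := by rw [mul_one]
    rw [ENNReal.sub_mul fun _ _ => hε, tsub_le_iff_right, mul_comm, mul_comm _ ε]
    exact hchord

variable {P : Set (I → ℝ≥0∞)}

lemma funOf_sub_mul_one_sub_pnorm_le (hP : IsPCS P) (ht : ∀ z ∈ P, funOf t z ≤ 1)
    {x w : I → ℝ≥0∞} (hx : x ∈ P) (hwx : w ≤ x) :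
    (funOf t x - funOf t w) * (1 - pnorm P x) ≤ pnorm P (x - w) := by
  refine le_sInf ?_
  rintro s ⟨-, u, hu, hxw⟩
  have hx_eq : x = w + s • u := by rw [← hxw, add_tsub_cancel_of_le hwx]
  rw [pnorm, sInf_eq_iInf', ENNReal.sub_iInf, ENNReal.mul_iSup]
  refine iSup_le ?_
  rintro ⟨r, -, z, hz, hxr⟩
  rcases le_or_gt 1 r with hr | hr
  · simp [tsub_eq_zero_of_le hr]
  · have hw : w ≤ r • z := hxr ▸ hwx
    change (funOf t x - funOf t w) * (1 - r) ≤ s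
    rw [hx_eq] at hx ⊢
    exact funOf_add_smul_sub_mul_le t (ENNReal.sub_ne_top ENNReal.one_ne_top) (ht _ hx)
      (ht _ (hP.add_smul_mem_of_le_smul hz hu hr.le hw))

lemma funOf_sub_le_pnorm_div (hP : IsPCS P) (ht : ∀ z ∈ P, funOf t z ≤ 1)
    {p : ℝ≥0∞} (hp : p < 1) {x y : I → ℝ≥0∞} (hx : x ∈ P) (hxp : pnorm P x ≤ p) :
    funOf t x - funOf t y ≤ pnorm P (x - x ⊓ y) / (1 - p) := by
  rw [ENNReal.le_div_iff_mul_le (Or.inl (tsub_pos_of_lt hp).ne')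
    (Or.inl (ENNReal.sub_ne_top ENNReal.one_ne_top))]
  calc (funOf t x - funOf t y) * (1 - p)
      ≤ (funOf t x - funOf t (x ⊓ y)) * (1 - pnorm P x) := by
        gcongr
        exact funOf_mono t inf_le_right
    _ ≤ pnorm P (x - x ⊓ y) := funOf_sub_mul_one_sub_pnorm_le t hP ht hx inf_le_left

end Fun

theorem stmt12_general {I : Type*}
    (P : Set (I → ℝ≥0∞)) (hP : IsPCS P)
    (t : Multiset I → ℝ≥0∞)
    (ht : ∀ z ∈ P, ∑' μ : Multiset I, t μ * mpow z μ ≤ 1)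
    (p : ℝ≥0∞) (hp : p < 1)
    (x y : I → ℝ≥0∞) (hx : x ∈ P) (hy : y ∈ P)
    (hxp : pnorm P x ≤ p) (hyp : pnorm P y ≤ p) :
    (∑' μ : Multiset I, t μ * mpow x μ) - (∑' μ : Multiset I, t μ * mpow y μ) ≤
      distX P x y / (1 - p) ∧
    (∑' μ : Multiset I, t μ * mpow y μ) - (∑' μ : Multiset I, t μ * mpow x μ) ≤
      distX P x y / (1 - p) := by
  constructor
  · calc funOf t x - funOf t y ≤ pnorm P (x - x ⊓ y) / (1 - p) :=
          funOf_sub_le_pnorm_div t hP ht hp hx hxp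
      _ ≤ distX P x y / (1 - p) := by gcongr; exact le_self_add
  · calc funOf t y - funOf t x ≤ pnorm P (y - y ⊓ x) / (1 - p) :=
          funOf_sub_le_pnorm_div t hP ht hp hy hyp
      _ ≤ distX P x y / (1 - p) := by rw [inf_comm]; gcongr; exact le_add_self

/-- Lipschitz property: for t : !X ⊸ 1 and p ∈ [0,1), Fun t is Lipschitz with
constant 1/(1−p) on the ball of radius p of P: |Fun t(x) − Fun t(y)| ≤ d_X(x,y)/(1−p)
(stated with the two truncated differences, which together express the absolute
value). -/
theorem stmt12 {I : Type*} [Countable I]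
    (P : Set (I → ℝ≥0∞)) (hP : IsPCS P)
    (t : Multiset I → ℝ≥0∞) (htfin : ∀ μ, t μ ≠ ⊤)
    (ht : ∀ z ∈ P, ∑' μ : Multiset I, t μ * mpow z μ ≤ 1)
    (p : ℝ≥0∞) (hp : p < 1)
    (x y : I → ℝ≥0∞) (hx : x ∈ P) (hy : y ∈ P)
    (hxp : pnorm P x ≤ p) (hyp : pnorm P y ≤ p) :
    (∑' μ : Multiset I, t μ * mpow x μ) - (∑' μ : Multiset I, t μ * mpow y μ) ≤
      distX P x y / (1 - p) ∧
    (∑' μ : Multiset I, t μ * mpow y μ) - (∑' μ : Multiset I, t μ * mpow x μ) ≤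
      distX P x y / (1 - p) :=
  stmt12_general P hP t ht p hp x y hx hy hxp hyp
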